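/- arXiv:1303.0506 — 2 statements merged into one kernel-verified Lean document; each statement's English description precedes it below -/
import Mathlib

section
/- Let f(z) = z + a_{n+1} z^{n+1} + ... be analytic on the closed unit disk, let α ≠ 1 be a complex number in f'(U), and let ρ > 1 be real. If |z f''(z)/f'(z)| < |1−α| n ρ / (1 + |1−α| ρ) for all z ∈ U, then |f'(z) − 1| < ρ |1−α| for all z ∈ U. -/
/-!
A zero of `f'` in `U` would be a pole of `logDeriv f' = f''/f'`, which the hypothesis keeps
bounded away from `0`; so `f'` does not vanish on `U`. Then `z f''/f'` is holomorphic on `U`,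
bounded by `n c` with `c = x / (1 + x)`, `x = ‖1 - α‖ ρ`, and vanishes to order `n` at `0`
(this is where `a₂ = ⋯ = aₙ = 0` enters), so the Schwarz lemma gives `‖z f''/f'‖ ≤ n c ‖z‖ⁿ`.
If `L` is the primitive of `f''/f'` with `L 0 = 0`, then `f' = exp L`, and integrating along the
radius gives `‖L z‖ ≤ c ‖z‖ⁿ < c`. Finally `‖exp L - 1‖ ≤ exp ‖L‖ - 1 < exp c - 1 ≤ x`, since
`c = 1 - (1 + x)⁻¹ ≤ log (1 + x)`.
-/

open Complex Metric Filter Set Topology Asymptotics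

section LogDeriv

variable {𝕜 : Type*} [NontriviallyNormedField 𝕜] [CompleteSpace 𝕜] [CharZero 𝕜] {g : 𝕜 → 𝕜}

theorem AnalyticAt.apply_ne_zero_of_isBoundedUnder_logDeriv {z₀ : 𝕜} (hg : AnalyticAt 𝕜 g z₀)
    (hg_top : analyticOrderAt g z₀ ≠ ⊤)
    (hb : IsBoundedUnder (· ≤ ·) (𝓝[≠] z₀) fun z ↦ ‖logDeriv g z‖) :
    g z₀ ≠ 0 := by
  intro hz₀
  have hord : meromorphicOrderAt (logDeriv g) z₀ = -1 := by
    apply meromorphicOrderAt_logDeriv_eq_neg_one hg.meromorphicAt <;>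
      rw [hg.meromorphicOrderAt_eq]
    · simpa using analyticOrderAt_ne_zero.2 ⟨hg, hz₀⟩
    · simpa using hg_top
  have := tendsto_norm_atTop_iff_cobounded.2 <|
    tendsto_cobounded_of_meromorphicOrderAt_neg (by rw [hord]; decide)
  exact not_isBoundedUnder_of_tendsto_atTop this hb

theorem apply_ne_zero_of_norm_mul_logDeriv_le {U : Set 𝕜} (hUo : IsOpen U)
    (hUc : IsPreconnected U) (hg : AnalyticOnNhd 𝕜 g U) (h0 : 0 ∈ U) (hg0 : g 0 ≠ 0) {C : ℝ}
    (hb : ∀ z ∈ U, ‖z * logDeriv g z‖ ≤ C) {z₀ : 𝕜} (hz₀ : z₀ ∈ U) : g z₀ ≠ 0 := by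
  rcases eq_or_ne z₀ 0 with rfl | hz₀0
  · exact hg0
  refine (hg z₀ hz₀).apply_ne_zero_of_isBoundedUnder_logDeriv
    (hg.analyticOrderAt_ne_top_of_isPreconnected hUc h0 hz₀
      (by simp [analyticOrderAt_eq_zero.2 (.inr hg0)])) ?_
  have hz0 : 0 < ‖z₀‖ := norm_pos_iff.2 hz₀0
  refine ⟨2 * C / ‖z₀‖, eventually_map.2 ?_⟩
  have hnorm : ∀ᶠ z in 𝓝 z₀, ‖z₀‖ / 2 < ‖z‖ :=
    continuousAt_const.eventually_lt continuous_norm.continuousAt (half_lt_self hz0)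
  filter_upwards [nhdsWithin_le_nhds (hUo.mem_nhds hz₀), nhdsWithin_le_nhds hnorm] with z hz hzn
  rw [le_div_iff₀ hz0]
  have := hb z hz
  rw [norm_mul] at this
  nlinarith [norm_nonneg (logDeriv g z)]

end LogDeriv

theorem natCast_add_one_le_analyticOrderAt_mul_logDeriv {𝕜 : Type*} [NontriviallyNormedField 𝕜]
    [CompleteSpace 𝕜] {g : 𝕜 → 𝕜} (hg : AnalyticAt 𝕜 g 0) (hg0 : g 0 ≠ 0) {m : ℕ}
    (hm : m ≤ analyticOrderAt (deriv g) 0) :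
    ((m + 1 : ℕ) : ℕ∞) ≤ analyticOrderAt (fun z ↦ z * logDeriv g z) 0 := by
  obtain ⟨F, hF, hgF⟩ := (natCast_le_analyticOrderAt hg.deriv).1 hm
  have hlog : AnalyticAt 𝕜 (logDeriv g) 0 := hg.deriv.div hg hg0
  refine (natCast_le_analyticOrderAt (analyticAt_id.fun_mul hlog)).2
    ⟨fun z ↦ F z / g z, hF.div hg hg0, ?_⟩
  filter_upwards [hgF] with z hz
  rw [id, logDeriv_apply, hz, sub_zero, smul_eq_mul, smul_eq_mul, pow_succ']
  ring

theorem natCast_le_analyticOrderAt_mul_logDeriv_deriv {𝕜 : Type*} [NontriviallyNormedField 𝕜]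
    [CompleteSpace 𝕜] [CharZero 𝕜] {f : 𝕜 → 𝕜} {n : ℕ} (hf : AnalyticAt 𝕜 (deriv f) 0)
    (hf0 : deriv f 0 ≠ 0) (hn : 1 ≤ n) (hcoef : ∀ k, 2 ≤ k → k ≤ n → iteratedDeriv k f 0 = 0) :
    (n : ℕ∞) ≤ analyticOrderAt (fun z ↦ z * logDeriv (deriv f) z) 0 := by
  obtain ⟨m, rfl⟩ := Nat.exists_eq_add_of_le' hn
  refine natCast_add_one_le_analyticOrderAt_mul_logDeriv hf hf0 ?_
  rw [natCast_le_analyticOrderAt_iff_iteratedDeriv_eq_zero hf.deriv]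
  intro i hi
  rw [← iteratedDeriv_succ', ← iteratedDeriv_succ']
  exact hcoef (i + 2) (by omega) (by omega)

theorem Complex.norm_le_mul_div_pow_of_mapsTo_ball_of_le_analyticOrderAt {E : Type*}
    [NormedAddCommGroup E] [NormedSpace ℂ E] [CompleteSpace E] {h : ℂ → E} {R M : ℝ} {n : ℕ}
    (hd : DifferentiableOn ℂ h (ball 0 R)) (h_maps : MapsTo h (ball 0 R) (closedBall 0 M))
    (hn : n ≤ analyticOrderAt h 0) {z : ℂ} (hz : z ∈ ball 0 R) :
    ‖h z‖ ≤ M * (‖z‖ / R) ^ n := by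
  rcases n with _ | m
  · simpa using h_maps hz
  have hR : 0 < R := nonempty_ball.1 ⟨z, hz⟩
  have ha : AnalyticAt ℂ h 0 := hd.analyticAt (ball_mem_nhds 0 hR)
  have h0 : h 0 = 0 := apply_eq_zero_of_analyticOrderAt_ne_zero (by
    intro h; rw [h] at hn; simp at hn)
  obtain ⟨F, hF, hhF⟩ := (natCast_le_analyticOrderAt ha).1 hn
  have hlittle : (h · - h 0) =o[𝓝 0] fun w ↦ ‖w - 0‖ ^ m := by
    have hO : (h · - h 0) =O[𝓝 0] fun w ↦ ‖w - 0‖ ^ (m + 1) := by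
      have := ((isBigO_refl (fun w : ℂ ↦ (w - 0) ^ (m + 1)) _).smul
        (hF.continuousAt.tendsto.isBigO_one ℂ)).norm_right
      simp only [smul_eq_mul, mul_one, norm_pow] at this
      exact this.congr' (hhF.mono fun w hw ↦ by simp [h0, hw]) EventuallyEq.rfl
    exact hO.trans_isLittleO (isLittleO_pow_sub_pow_sub 0 (Nat.lt_succ_self m))
  simpa [h0] using dist_le_mul_div_pow_of_mapsTo_ball_of_isLittleO hd (h0 ▸ h_maps) hlittle hz

theorem Complex.eqOn_exp_of_hasDerivAt_logDeriv {g L : ℂ → ℂ} {U : Set ℂ} (hUo : IsOpen U)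
    (hUc : IsPreconnected U) (hg : DifferentiableOn ℂ g U) (hg0 : ∀ z ∈ U, g z ≠ 0)
    (hL : ∀ z ∈ U, HasDerivAt L (logDeriv g z) z) {z₁ : ℂ} (hz₁ : z₁ ∈ U)
    (hgz₁ : g z₁ = exp (L z₁)) : EqOn g (exp ∘ L) U := by
  have hLd : DifferentiableOn ℂ L U := fun z hz ↦ (hL z hz).differentiableAt.differentiableWithinAt
  have hlog : EqOn (logDeriv g) (logDeriv (exp ∘ L)) U := fun z hz ↦ by
    rw [logDeriv_comp differentiableAt_exp (hL z hz).differentiableAt, Complex.logDeriv_exp,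
      Pi.one_apply, one_mul, (hL z hz).deriv]
  obtain ⟨c, -, hc⟩ := (logDeriv_eqOn_iff hg (differentiable_exp.comp_differentiableOn hLd) hUo hUc
    (fun z _ ↦ exp_ne_zero _) hg0).1 hlog
  have hc1 : c = 1 := by
    have := hc hz₁
    rw [Pi.smul_apply, smul_eq_mul, hgz₁, Function.comp_apply] at this
    exact (mul_eq_right₀ (exp_ne_zero _)).1 this.symm
  simpa [hc1] using hc

theorem norm_sub_apply_zero_le_of_norm_smul_deriv_le {E : Type*} [NormedAddCommGroup E]
    [NormedSpace ℂ E] [CompleteSpace E] {L L' : ℂ → E} {s : Set ℂ} (hs : StarConvex ℝ 0 s)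
    (hL : ∀ w ∈ s, HasDerivAt L (L' w) w) (hL' : ContinuousOn L' s) {C : ℝ} {n : ℕ} (hn : n ≠ 0)
    (hbound : ∀ w ∈ s, ‖w • L' w‖ ≤ C * ‖w‖ ^ n) {z : ℂ} (hz : z ∈ s) :
    ‖L z - L 0‖ ≤ C / n * ‖z‖ ^ n := by
  obtain ⟨m, rfl⟩ := Nat.exists_eq_add_one_of_ne_zero hn
  have hmem : ∀ t ∈ Icc (0 : ℝ) 1, (t : ℂ) * z ∈ s := fun t ht ↦ by
    simpa [Complex.real_smul] using hs.smul_mem hz ht.1 ht.2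
  have hderiv : ∀ t ∈ uIcc (0 : ℝ) 1, HasDerivAt (fun t : ℝ ↦ L (t * z)) (z • L' (t * z)) t := by
    intro t ht
    rw [uIcc_of_le zero_le_one] at ht
    have hline : HasDerivAt (fun t : ℝ ↦ (t : ℂ) * z) z t := by
      simpa using (hasDerivAt_id t).ofReal_comp.mul_const z
    exact (hL _ (hmem t ht)).scomp t hline
  have hcont : ContinuousOn (fun t : ℝ ↦ z • L' (t * z)) (uIcc 0 1) := by
    rw [uIcc_of_le zero_le_one]
    exact continuousOn_const.smul (hL'.comp (by fun_prop) hmem)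
  have hftc := intervalIntegral.integral_eq_sub_of_hasDerivAt hderiv hcont.intervalIntegrable
  simp only [ofReal_one, one_mul, ofReal_zero, zero_mul] at hftc
  rw [← hftc]
  calc ‖∫ t in (0 : ℝ)..1, z • L' (t * z)‖
      ≤ ∫ t in (0 : ℝ)..1, C * ‖z‖ ^ (m + 1) * t ^ m := by
        refine intervalIntegral.norm_integral_le_of_norm_le zero_le_one
          (MeasureTheory.ae_of_all _ fun t ht ↦ ?_)
          (Continuous.intervalIntegrable (by fun_prop) _ _)
        have ht0 : 0 < t := ht.1
        refine le_of_mul_le_mul_left ?_ ht0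
        calc t * ‖z • L' (t * z)‖ = ‖(t * z) • L' (t * z)‖ := by
              rw [mul_smul, norm_smul (t : ℂ), norm_real, Real.norm_of_nonneg ht0.le]
          _ ≤ C * ‖(t : ℂ) * z‖ ^ (m + 1) := hbound _ (hmem t ⟨ht0.le, ht.2⟩)
          _ = t * (C * ‖z‖ ^ (m + 1) * t ^ m) := by
              rw [norm_mul, norm_real, Real.norm_of_nonneg ht0.le]
              ring
    _ = C / (m + 1 : ℕ) * ‖z‖ ^ (m + 1) := by
        rw [intervalIntegral.integral_const_mul, integral_pow]
        push_cast
        ring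

theorem Complex.exists_eqOn_exp_of_norm_mul_logDeriv_le {g : ℂ → ℂ} {R C : ℝ} {n : ℕ}
    (hg : DifferentiableOn ℂ g (ball 0 R)) (hg0 : g 0 = 1) (hne : ∀ z ∈ ball 0 R, g z ≠ 0)
    (hn : n ≠ 0) (hb : ∀ z ∈ ball 0 R, ‖z * logDeriv g z‖ ≤ C * ‖z‖ ^ n) :
    ∃ L : ℂ → ℂ, EqOn g (exp ∘ L) (ball 0 R) ∧ ∀ z ∈ ball 0 R, ‖L z‖ ≤ C / n * ‖z‖ ^ n := by
  rcases le_or_gt R 0 with hR | hR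
  · exact ⟨0, by simp [ball_eq_empty.2 hR], by simp [ball_eq_empty.2 hR]⟩
  have h0 : (0 : ℂ) ∈ ball 0 R := mem_ball_self hR
  have hlog : DifferentiableOn ℂ (logDeriv g) (ball 0 R) := (hg.deriv isOpen_ball).div hg hne
  obtain ⟨L, hL0, hL⟩ := hlog.isExactOn_ball.with_val_at 0 0
  refine ⟨L, eqOn_exp_of_hasDerivAt_logDeriv isOpen_ball (convex_ball 0 R).isPreconnected hg hne
    hL h0 (by rw [hg0, hL0, exp_zero]), fun z hz ↦ ?_⟩
  simpa [hL0] using norm_sub_apply_zero_le_of_norm_smul_deriv_le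
    ((convex_ball 0 R).starConvex h0) hL hlog.continuousOn hn (fun w hw ↦ by simpa using hb w hw) hz

theorem Complex.norm_exp_sub_one_lt_of_norm_lt {w : ℂ} {x : ℝ} (hx : 0 ≤ x)
    (hw : ‖w‖ < x / (1 + x)) : ‖exp w - 1‖ < x := by
  have hlog : x / (1 + x) ≤ Real.log (1 + x) :=
    calc x / (1 + x) = 1 - (1 + x)⁻¹ := by field_simp; ring
      _ ≤ Real.log (1 + x) := Real.one_sub_inv_le_log_of_pos (by positivity)
  calc ‖exp w - 1‖ ≤ Real.exp ‖w‖ - 1 := by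
        simpa using norm_exp_sub_sum_le_exp_norm_sub_sum w 1
    _ < Real.exp (Real.log (1 + x)) - 1 := by gcongr; exact hw.trans_le hlog
    _ = x := by rw [Real.exp_log (by positivity)]; ring

theorem thm1_general (n : ℕ) (hn : 1 ≤ n) (f : ℂ → ℂ)
    (hf : AnalyticOn ℂ f (closedBall (0 : ℂ) 1))
    (hf'0 : deriv f 0 = 1)
    (hcoef : ∀ k, 2 ≤ k → k ≤ n → iteratedDeriv k f 0 = 0)
    (α : ℂ) (hα : α ≠ 1)
    (ρ : ℝ) (hρ : 1 < ρ)
    (h : ∀ z ∈ ball (0 : ℂ) 1,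
      ‖z * deriv (deriv f) z / deriv f z‖ <
        ‖1 - α‖ * n * ρ / (1 + ‖1 - α‖ * ρ)) :
    ∀ z ∈ ball (0 : ℂ) 1, ‖deriv f z - 1‖ < ρ * ‖1 - α‖ := by
  set c := ‖1 - α‖ * ρ / (1 + ‖1 - α‖ * ρ)
  have hc : 0 < c := by
    have : 0 < ‖1 - α‖ := norm_pos_iff.2 (sub_ne_zero.2 hα.symm)
    have : 0 < ρ := by linarith
    positivity
  have h0 : (0 : ℂ) ∈ ball 0 1 := mem_ball_self one_pos
  have hf' : AnalyticOnNhd ℂ (deriv f) (ball 0 1) :=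
    (isOpen_ball.analyticOn_iff_analyticOnNhd.1 (hf.mono ball_subset_closedBall)).deriv
  have hbound : ∀ z ∈ ball (0 : ℂ) 1, ‖z * logDeriv (deriv f) z‖ < n * c := fun z hz ↦ by
    convert h z hz using 1
    · rw [logDeriv_apply, mul_div_assoc]
    · ring
  have hne : ∀ z ∈ ball (0 : ℂ) 1, deriv f z ≠ 0 := fun z hz ↦
    apply_ne_zero_of_norm_mul_logDeriv_le isOpen_ball (convex_ball 0 1).isPreconnected hf' h0
      (by simp [hf'0]) (fun w hw ↦ (hbound w hw).le) hz
  have hschwarz : ∀ z ∈ ball (0 : ℂ) 1, ‖z * logDeriv (deriv f) z‖ ≤ n * c * ‖z‖ ^ n :=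
    fun z hz ↦ by
      simpa [logDeriv_apply] using Complex.norm_le_mul_div_pow_of_mapsTo_ball_of_le_analyticOrderAt
        (differentiableOn_id.mul (hf'.deriv.differentiableOn.div hf'.differentiableOn hne))
        (fun w hw ↦ mem_closedBall_zero_iff.2 (hbound w hw).le)
        (natCast_le_analyticOrderAt_mul_logDeriv_deriv (hf' 0 h0) (by simp [hf'0]) hn hcoef) hz
  obtain ⟨L, hexp, hL⟩ := Complex.exists_eqOn_exp_of_norm_mul_logDeriv_le hf'.differentiableOn
    hf'0 hne (by omega) hschwarz
  intro z hz
  rw [hexp hz, mul_comm]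
  refine Complex.norm_exp_sub_one_lt_of_norm_lt (by positivity) ((hL z hz).trans_lt ?_)
  rw [mul_div_cancel_left₀ _ (by positivity)]
  exact mul_lt_of_lt_one_right hc (pow_lt_one₀ (norm_nonneg z) (mem_ball_zero_iff.1 hz) (by omega))

theorem thm1 (n : ℕ) (hn : 1 ≤ n) (f : ℂ → ℂ)
    (hf : AnalyticOn ℂ f (closedBall (0 : ℂ) 1))
    (hf0 : f 0 = 0) (hf'0 : deriv f 0 = 1)
    (hcoef : ∀ k, 2 ≤ k → k ≤ n → iteratedDeriv k f 0 = 0)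
    (α : ℂ) (hα : α ≠ 1) (hαmem : α ∈ deriv f '' ball (0 : ℂ) 1)
    (ρ : ℝ) (hρ : 1 < ρ)
    (h : ∀ z ∈ ball (0 : ℂ) 1,
      ‖z * deriv (deriv f) z / deriv f z‖ <
        ‖1 - α‖ * n * ρ / (1 + ‖1 - α‖ * ρ)) :
    ∀ z ∈ ball (0 : ℂ) 1, ‖deriv f z - 1‖ < ρ * ‖1 - α‖ :=
  thm1_general n hn f hf hf'0 hcoef α hα ρ hρ h
end

section
/- Let w be analytic on the open unit disk U with a zero of order at least n ≥ 1 at 0, let c ∈ ℂ with c ≠ 0, ρ > 1, and suppose 1 + c w(z) ≠ 0 on U. If |c² z w'(z) w(z) / (1 + c w(z))| < |c|² n ρ² / (1 + |c| ρ) for all z ∈ U, then |w(z)| < ρ for all z ∈ U. -/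
/-!
If `‖w‖` reached `ρ` in the disk, take a point `z₀` of least modulus where it does, so that
`‖w‖ ≤ ρ = ‖w z₀‖` on `|z| ≤ |z₀|`. Writing `w = zⁿ g`, the maximum modulus principle for `g`
gives `‖w (t z₀)‖ ≤ tⁿ ρ` for `0 ≤ t ≤ 1`, and differentiating along the radius at `t = 1` gives
Jack's inequality `|z₀ w'(z₀)| ≥ n ρ`. Together with `|1 + c w(z₀)| ≤ 1 + |c| ρ` this makes the
quantity bounded in the hypothesis at least `|c|² n ρ² / (1 + |c| ρ)` at `z₀`.
-/

open Complex Metric Filter Set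
open scoped Topology

theorem AnalyticOnNhd.exists_eq_pow_smul_of_iteratedDeriv_eq_zero {𝕜 E : Type*}
    [NontriviallyNormedField 𝕜] [CharZero 𝕜] [NormedAddCommGroup E] [NormedSpace 𝕜 E]
    [CompleteSpace E] {f : 𝕜 → E} {U : Set 𝕜} {n : ℕ} (hf : AnalyticOnNhd 𝕜 f U)
    (h0 : 0 ∈ U) (hzero : ∀ k < n, iteratedDeriv k f 0 = 0) :
    ∃ g : 𝕜 → E, AnalyticOnNhd 𝕜 g U ∧ ∀ z, f z = z ^ n • g z := by
  obtain ⟨g, hg0, hfg⟩ := (hf 0 h0).exists_eq_sum_add_pow_mul n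
  have htaylor : ∀ z : 𝕜,
      ∑ i ∈ Finset.range n, (z ^ i / i.factorial) • iteratedDeriv i f 0 = 0 := fun z =>
    Finset.sum_eq_zero fun k hk => by rw [hzero k (Finset.mem_range.mp hk), smul_zero]
  simp only [htaylor, zero_add] at hfg
  refine ⟨g, fun z hz => ?_, hfg⟩
  rcases eq_or_ne z 0 with rfl | hz0
  · exact hg0
  have hg : g =ᶠ[𝓝 z] fun y => (y ^ n)⁻¹ • f y := by
    filter_upwards [isOpen_ne.mem_nhds hz0] with y hy
    rw [hfg y, inv_smul_smul₀ (pow_ne_zero n hy)]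
  exact (((analyticAt_id.pow n).inv (pow_ne_zero n hz0)).smul (hf z hz)).congr hg.symm

section

variable {E : Type*} [NormedAddCommGroup E]

theorem ContinuousOn.exists_eq_and_le_on_closedBall [NormedSpace ℝ E] [ProperSpace E]
    {u : E → ℝ} {R ρ : ℝ} (hu : ContinuousOn u (ball 0 R)) (h0 : u 0 < ρ) {z₁ : E}
    (hz₁ : z₁ ∈ ball 0 R) (h₁ : ρ ≤ u z₁) :
    ∃ z₀ ∈ ball (0 : E) R, u z₀ = ρ ∧ ∀ z ∈ closedBall 0 ‖z₀‖, u z ≤ ρ := by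
  set K := closedBall (0 : E) ‖z₁‖ ∩ u ⁻¹' Ici ρ
  have hKR : closedBall (0 : E) ‖z₁‖ ⊆ ball 0 R :=
    closedBall_subset_ball (mem_ball_zero_iff.mp hz₁)
  have hK : IsCompact K := (isCompact_closedBall 0 _).of_isClosed_subset
    ((hu.mono hKR).preimage_isClosed_of_isClosed isClosed_closedBall isClosed_Ici)
    inter_subset_left
  obtain ⟨z₀, ⟨hz₀₁, hz₀ρ⟩, hmin⟩ :=
    hK.exists_isMinOn ⟨z₁, mem_closedBall_zero_iff.mpr le_rfl, h₁⟩ continuous_norm.continuousOn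
  rw [mem_closedBall_zero_iff] at hz₀₁
  have hz₀ : z₀ ≠ 0 := by
    rintro rfl
    exact (h0.trans_le hz₀ρ).false
  have hlt : ∀ z ∈ ball (0 : E) ‖z₀‖, u z < ρ := fun z hz => by
    by_contra! hρz
    rw [mem_ball_zero_iff] at hz
    exact (hmin ⟨mem_closedBall_zero_iff.mpr (hz.le.trans hz₀₁), hρz⟩).not_gt hz
  have hle : ∀ z ∈ closedBall (0 : E) ‖z₀‖, u z ≤ ρ := fun z hz => by
    have hzR : z ∈ ball (0 : E) R := hKR (closedBall_subset_closedBall hz₀₁ hz)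
    rw [← closure_ball 0 (norm_ne_zero_iff.mpr hz₀)] at hz
    exact ContinuousWithinAt.closure_le hz
      (hu.continuousAt (isOpen_ball.mem_nhds hzR)).continuousWithinAt continuousWithinAt_const
      fun y hy => (hlt y hy).le
  exact ⟨z₀, hKR (mem_closedBall_zero_iff.mpr hz₀₁),
    le_antisymm (hle z₀ (mem_closedBall_zero_iff.mpr le_rfl)) hz₀ρ, hle⟩

theorem norm_le_div_pow_mul_of_eq_pow_smul [NormedSpace ℂ E] {f g : ℂ → E} {n : ℕ} {r M : ℝ}
    (hr : 0 < r) (hg : DiffContOnCl ℂ g (ball 0 r)) (hfg : ∀ z, f z = z ^ n • g z)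
    (hM : ∀ z ∈ sphere (0 : ℂ) r, ‖f z‖ ≤ M) {z : ℂ} (hz : z ∈ closedBall 0 r) :
    ‖f z‖ ≤ (‖z‖ / r) ^ n * M := by
  have hgM : ‖g z‖ ≤ M / r ^ n := by
    refine Complex.norm_le_of_forall_mem_frontier_norm_le isBounded_ball hg (fun ζ hζ => ?_)
      (by rwa [closure_ball 0 hr.ne'])
    rw [frontier_ball 0 hr.ne'] at hζ
    have hfζ := hM ζ hζ
    rw [hfg, norm_smul, norm_pow, mem_sphere_zero_iff_norm.mp hζ] at hfζ
    rwa [le_div_iff₀' (by positivity)]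
  rw [hfg, norm_smul, norm_pow, div_pow, div_mul_eq_mul_div, mul_div_assoc]
  gcongr

theorem natCast_mul_le_norm_of_hasDerivAt_of_norm_le_pow_mul [NormedSpace ℝ E] {φ : ℝ → E}
    {D : E} {n : ℕ} {M : ℝ} (hφ : HasDerivAt φ D 1) (hφ1 : ‖φ 1‖ = M)
    (hle : ∀ t ∈ Ioo (0 : ℝ) 1, ‖φ t‖ ≤ t ^ n * M) : n * M ≤ ‖D‖ := by
  have hpow : Tendsto (slope (fun t : ℝ => t ^ n * M) 1) (𝓝[<] 1) (𝓝 (n * M)) := by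
    simpa using ((hasDerivAt_pow n (1 : ℝ)).mul_const M).tendsto_slope.mono_left
      (nhdsLT_le_nhdsNE 1)
  refine le_of_tendsto_of_tendsto hpow
    (hφ.tendsto_slope.mono_left (nhdsLT_le_nhdsNE 1)).norm ?_
  filter_upwards [Ioo_mem_nhdsLT zero_lt_one] with t ht
  have h1t : 0 < 1 - t := sub_pos.mpr ht.2
  have hdiff : M - t ^ n * M ≤ ‖φ t - φ 1‖ := by
    linarith [hle t ht, norm_sub_norm_le (φ 1) (φ t), norm_sub_rev (φ 1) (φ t)]
  calc slope (fun t : ℝ => t ^ n * M) 1 t = (1 - t)⁻¹ * (M - t ^ n * M) := by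
        rw [slope_def_field, one_pow, one_mul, ← neg_div_neg_eq, neg_sub, neg_sub,
          div_eq_inv_mul]
    _ ≤ (1 - t)⁻¹ * ‖φ t - φ 1‖ := by gcongr
    _ = ‖slope φ 1 t‖ := by
        rw [slope_def_module, norm_smul, norm_inv, Real.norm_eq_abs, abs_sub_comm,
          abs_of_pos h1t]

/-- Jack's lemma. -/
theorem natCast_mul_norm_le_norm_smul_deriv_of_isMaxOn [NormedSpace ℂ E] {f g : ℂ → E}
    {n : ℕ} {R : ℝ} (hg : DifferentiableOn ℂ g (ball 0 R)) (hfg : ∀ z, f z = z ^ n • g z)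
    {z₀ : ℂ} (hz₀ : z₀ ∈ ball 0 R) (hmax : IsMaxOn (fun z => ‖f z‖) (closedBall 0 ‖z₀‖) z₀) :
    n * ‖f z₀‖ ≤ ‖z₀ • deriv f z₀‖ := by
  rcases eq_or_ne z₀ 0 with rfl | hz₀0
  · cases n <;> simp [hfg]
  have hr : 0 < ‖z₀‖ := norm_pos_iff.mpr hz₀0
  have hgr : DiffContOnCl ℂ g (ball 0 ‖z₀‖) :=
    (hg.mono ((closure_ball 0 hr.ne').trans_subset
      (closedBall_subset_ball (mem_ball_zero_iff.mp hz₀)))).diffContOnCl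
  have hfd : DifferentiableAt ℂ f z₀ := by
    rw [show f = fun z => z ^ n • g z from funext hfg]
    exact (differentiableAt_id.pow n).smul (hg.differentiableAt (isOpen_ball.mem_nhds hz₀))
  have hradial : HasDerivAt (fun t : ℝ => f (t * z₀)) (z₀ • deriv f z₀) 1 := by
    have hf : HasDerivAt f (deriv f z₀) (((1 : ℝ) : ℂ) * z₀) := by simpa using hfd.hasDerivAt
    have hline : HasDerivAt (fun t : ℝ => (t : ℂ) * z₀) z₀ 1 := by
      simpa using ((hasDerivAt_id (1 : ℝ)).ofReal_comp).mul_const z₀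
    exact hf.scomp 1 hline
  refine natCast_mul_le_norm_of_hasDerivAt_of_norm_le_pow_mul hradial (by simp) fun t ht => ?_
  have htz : ‖(t : ℂ) * z₀‖ = t * ‖z₀‖ := by
    rw [norm_mul, norm_real, Real.norm_of_nonneg ht.1.le]
  have := norm_le_div_pow_mul_of_eq_pow_smul hr hgr hfg
    (fun z hz => hmax (sphere_subset_closedBall hz))
    (mem_closedBall_zero_iff.mpr (htz.trans_le (mul_le_of_le_one_left hr.le ht.2.le)))
  rwa [htz, mul_div_cancel_right₀ _ hr.ne'] at this

end

theorem core2_general (n : ℕ) (hn : 1 ≤ n) (w : ℂ → ℂ)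
    (hw : AnalyticOn ℂ w (ball (0 : ℂ) 1))
    (hzero : ∀ k < n, iteratedDeriv k w 0 = 0)
    (c : ℂ) (ρ : ℝ) (hρ : 1 < ρ)
    (hden : ∀ z ∈ ball (0 : ℂ) 1, 1 + c * w z ≠ 0)
    (h : ∀ z ∈ ball (0 : ℂ) 1,
      ‖c ^ 2 * z * deriv w z * w z / (1 + c * w z)‖ <
        ‖c‖ ^ 2 * n * ρ ^ 2 / (1 + ‖c‖ * ρ)) :
    ∀ z ∈ ball (0 : ℂ) 1, ‖w z‖ < ρ := by
  have hwd : DifferentiableOn ℂ w (ball 0 1) := hw.differentiableOn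
  obtain ⟨g, hg, hwg⟩ :=
    (hwd.analyticOnNhd isOpen_ball).exists_eq_pow_smul_of_iteratedDeriv_eq_zero
      (mem_ball_self one_pos) hzero
  have hw0 : ‖w 0‖ < ρ := by
    simpa [show w 0 = 0 by simpa using hzero 0 hn] using one_pos.trans hρ
  by_contra! ⟨z₁, hz₁, hρz₁⟩
  obtain ⟨z₀, hz₀, hwz₀, hle⟩ :=
    hwd.continuousOn.norm.exists_eq_and_le_on_closedBall hw0 hz₁ hρz₁
  have hjack : n * ρ ≤ ‖z₀ * deriv w z₀‖ := by
    rw [← hwz₀, ← smul_eq_mul]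
    exact natCast_mul_norm_le_norm_smul_deriv_of_isMaxOn hg.differentiableOn hwg hz₀
      fun z hz => (hle z hz).trans hwz₀.ge
  have hden₀ : 0 < ‖1 + c * w z₀‖ := norm_pos_iff.mpr (hden z₀ hz₀)
  have hdenle : ‖1 + c * w z₀‖ ≤ 1 + ‖c‖ * ρ := by
    simpa [hwz₀] using norm_add_le (1 : ℂ) (c * w z₀)
  refine (h z₀ hz₀).not_ge ?_
  calc ‖c‖ ^ 2 * n * ρ ^ 2 / (1 + ‖c‖ * ρ) ≤ ‖c‖ ^ 2 * (n * ρ) * ρ / ‖1 + c * w z₀‖ := by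
        rw [show ‖c‖ ^ 2 * n * ρ ^ 2 = ‖c‖ ^ 2 * (n * ρ) * ρ by ring]
        gcongr
    _ ≤ ‖c‖ ^ 2 * ‖z₀ * deriv w z₀‖ * ρ / ‖1 + c * w z₀‖ := by gcongr
    _ = ‖c ^ 2 * z₀ * deriv w z₀ * w z₀ / (1 + c * w z₀)‖ := by
        simp only [norm_div, norm_mul, norm_pow, hwz₀]
        ring

theorem core2 (n : ℕ) (hn : 1 ≤ n) (w : ℂ → ℂ)
    (hw : AnalyticOn ℂ w (ball (0 : ℂ) 1))
    (hzero : ∀ k < n, iteratedDeriv k w 0 = 0)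
    (c : ℂ) (hc : c ≠ 0) (ρ : ℝ) (hρ : 1 < ρ)
    (hden : ∀ z ∈ ball (0 : ℂ) 1, 1 + c * w z ≠ 0)
    (h : ∀ z ∈ ball (0 : ℂ) 1,
      ‖c ^ 2 * z * deriv w z * w z / (1 + c * w z)‖ <
        ‖c‖ ^ 2 * n * ρ ^ 2 / (1 + ‖c‖ * ρ)) :
    ∀ z ∈ ball (0 : ℂ) 1, ‖w z‖ < ρ :=
  core2_general n hn w hw hzero c ρ hρ hden h
end
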